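/- In Euclidean plane geometry (κ = 0 case of Alexandrov's lemma): let p, q, s be points and x a point strictly between q and s on the segment [qs] of a comparison configuration, meaning we are given lengths |pq|, |px|, |ps|, |qx|, |xs| with |qx| + |xs| = |qs|, all satisfying triangle inequalities. Let ∠̃_q(p,x) denote the angle at q in the Euclidean triangle with sides |qp|, |qx|, |px|, and similarly for the other comparison angles. Then ∠̃_q(p,x) ≥ ∠̃_q(p,s) if and only if ∠̃_x(p,q) + ∠̃_x(p,s) ≤ π. -/
import Mathlib
set_option maxHeartbeats 1000000


open Real Set

private lemma arccos_le_arccos_iff' {x y : ℝ} (hx : -1 ≤ x) (hy : y ≤ 1) :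
    Real.arccos x ≤ Real.arccos y ↔ y ≤ x := by
  rw [Real.arccos, Real.arccos, sub_le_sub_iff_left]
  constructor
  · intro h
    by_contra hxy
    push_neg at hxy
    have : Real.arcsin x < Real.arcsin y :=
      Real.strictMonoOn_arcsin ⟨hx, le_of_lt (lt_of_lt_of_le hxy hy)⟩
        ⟨le_trans hx hxy.le, hy⟩ hxy
    linarith
  · exact fun h => Real.monotone_arcsin h

/-- Euclidean comparison angle at the vertex between sides of lengths `x`, `y`,
opposite a side of length `z`. -/
noncomputable def cAngle (x y z : ℝ) : ℝ :=
  Real.arccos ((x ^ 2 + y ^ 2 - z ^ 2) / (2 * x * y))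

/-- Alexandrov's lemma for `κ = 0`: given lengths `a = |pq|`, `b = |qx|`, `d = |xs|`,
`c = |px|`, `e = |ps|` with `|qs| = b + d` and both triangles valid,
`∠̃_q(p,x) ≥ ∠̃_q(p,s)` iff `∠̃_x(p,q) + ∠̃_x(p,s) ≤ π`. -/
theorem stmt14 (a b c d e : ℝ)
    (ha : 0 < a) (hb : 0 < b) (hc : 0 < c) (hd : 0 < d) (he : 0 < e)
    (h1 : c ≤ a + b) (h2 : a ≤ b + c) (h3 : b ≤ a + c)
    (h4 : e ≤ c + d) (h5 : c ≤ d + e) (h6 : d ≤ c + e) :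
    cAngle a b c ≥ cAngle a (b + d) e ↔ cAngle c b a + cAngle c d e ≤ Real.pi := by
  set u1 : ℝ := (a ^ 2 + b ^ 2 - c ^ 2) / (2 * a * b) with hu1
  set u2 : ℝ := (a ^ 2 + (b + d) ^ 2 - e ^ 2) / (2 * a * (b + d)) with hu2
  set v1 : ℝ := (c ^ 2 + b ^ 2 - a ^ 2) / (2 * c * b) with hv1
  set v2 : ℝ := (c ^ 2 + d ^ 2 - e ^ 2) / (2 * c * d) with hv2
  have hab : (0:ℝ) < 2 * a * b := by positivity
  have habd : (0:ℝ) < 2 * a * (b + d) := by positivity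
  have hcb : (0:ℝ) < 2 * c * b := by positivity
  have hcd : (0:ℝ) < 2 * c * d := by positivity
  have hu1le : u1 ≤ 1 := by
    rw [hu1, div_le_one hab]; nlinarith
  have hu2ge : -1 ≤ u2 := by
    rw [hu2, le_div_iff₀ habd]; nlinarith
  have hv1le : v1 ≤ 1 := by
    rw [hv1, div_le_one hcb]; nlinarith
  have hv1ge : -1 ≤ v1 := by
    rw [hv1, le_div_iff₀ hcb]; nlinarith
  have hv2le : v2 ≤ 1 := by
    rw [hv2, div_le_one hcd]; nlinarith
  have hv2ge : -1 ≤ v2 := by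
    rw [hv2, le_div_iff₀ hcd]; nlinarith
  have key : 0 ≤ b * (c ^ 2 + d ^ 2 - e ^ 2) + d * (c ^ 2 + b ^ 2 - a ^ 2) ↔
      cAngle c b a + cAngle c d e ≤ Real.pi := by
    rw [cAngle, cAngle, ← hv1, ← hv2]
    rw [show Real.arccos v1 + Real.arccos v2 ≤ Real.pi ↔
        Real.arccos v1 ≤ Real.pi - Real.arccos v2 by constructor <;> intro <;> linarith]
    rw [← Real.arccos_neg, arccos_le_arccos_iff' hv1ge (by linarith)]
    rw [hv1, hv2, ← neg_div, div_le_div_iff₀ hcd hcb]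
    constructor <;> intro h <;> nlinarith [mul_pos hc hb, mul_pos hc hd]
  have key2 : 0 ≤ b * (c ^ 2 + d ^ 2 - e ^ 2) + d * (c ^ 2 + b ^ 2 - a ^ 2) ↔
      cAngle a b c ≥ cAngle a (b + d) e := by
    rw [cAngle, cAngle, ← hu1, ← hu2, ge_iff_le,
      arccos_le_arccos_iff' hu2ge hu1le, hu1, hu2, div_le_div_iff₀ hab habd]
    constructor <;> intro h <;> nlinarith [mul_pos ha hb, mul_pos ha hd]
  rw [← key, ← key2]
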